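/- Under the hypotheses of monotone velocity, the composed supply function w ↦ s(ρ†(v⁺,w), w) is non-decreasing in w, where ρ†(v⁺,w) is the density with V(ρ†,w) = v⁺ and s is the supply function. -/

import Mathlib

/-!
Fix `w ≤ w'` and write `ρ = ρ†(v⁺,w)`, `ρ' = ρ†(v⁺,w')`. The supply never exceeds `Qmax`, and
`Qmax` is non-decreasing, so only the case `σ(w') < ρ'` needs work; there
`s(ρ',w') = Q(ρ',w') = v⁺ρ'`. If also `σ(w) < ρ`, this is `v⁺ρ ≤ v⁺ρ'`. Otherwise
`ρ ≤ σ(w)` and `s(ρ,w) = Qmax(w)`: when `σ(w) ≤ ρ'`, use `V(σ(w),w) ≤ V(ρ,w) = v⁺`; when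
`ρ' < σ(w)`, the point `ρ'` lies between the two maximizers `σ(w')` and `σ(w)`, and concavity of
`Q(·,w')` gives `Q(σ(w),w) ≤ Q(σ(w),w') ≤ Q(ρ',w')`.
-/

open Set

theorem ConcaveOn.right_le_of_mem_Icc {𝕜 β : Type*} [Field 𝕜] [LinearOrder 𝕜]
    [IsStrictOrderedRing 𝕜] [AddCommGroup β] [LinearOrder β] [IsOrderedAddMonoid β]
    [Module 𝕜 β] [IsStrictOrderedModule 𝕜 β] {s : Set 𝕜} {f : 𝕜 → β} {x y z : 𝕜}
    (hf : ConcaveOn 𝕜 s f) (hx : x ∈ s) (hy : y ∈ s) (hz : z ∈ Icc x y) (hyx : f y ≤ f x) :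
    f y ≤ f z :=
  (min_eq_right hyx).symm.le.trans (hf.min_le_of_mem_Icc hx hy hz)

theorem maxFlux_le_of_le_argmax_of_argmax_lt {ρmax v w w' ρ ρ' : ℝ} {V Q : ℝ → ℝ → ℝ}
    {σ : ℝ → ℝ} (hQ : ∀ ρ w, Q ρ w = ρ * V ρ w) (hv : 0 ≤ v)
    (hanti : AntitoneOn (fun ρ => V ρ w) (Icc 0 ρmax))
    (hVmono : V (σ w) w ≤ V (σ w) w') (hconc' : ConcaveOn ℝ (Icc 0 ρmax) (fun ρ => Q ρ w'))
    (hσ : σ w ∈ Icc 0 ρmax) (hσ' : σ w' ∈ Icc 0 ρmax) (hσmax' : Q (σ w) w' ≤ Q (σ w') w')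
    (hρ : ρ ∈ Icc 0 ρmax) (hVρ : V ρ w = v) (hVρ' : V ρ' w' = v)
    (hρσ : ρ ≤ σ w) (hσρ' : σ w' < ρ') :
    Q (σ w) w ≤ ρ' * v := by
  rcases le_or_gt (σ w) ρ' with hσρ' | hρ'σ
  · have hVσ : V (σ w) w ≤ v := hVρ ▸ hanti hρ hσ hρσ
    calc Q (σ w) w = σ w * V (σ w) w := hQ _ _
      _ ≤ σ w * v := mul_le_mul_of_nonneg_left hVσ hσ.1
      _ ≤ ρ' * v := mul_le_mul_of_nonneg_right hσρ' hv
  · calc Q (σ w) w = σ w * V (σ w) w := hQ _ _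
      _ ≤ σ w * V (σ w) w' := mul_le_mul_of_nonneg_left hVmono hσ.1
      _ = Q (σ w) w' := (hQ _ _).symm
      _ ≤ Q ρ' w' := hconc'.right_le_of_mem_Icc hσ' hσ ⟨hσρ'.le, hρ'σ.le⟩ hσmax'
      _ = ρ' * v := by rw [hQ, hVρ']

theorem gsom_supply_of_rho_dagger_monotone_general
    (ρmax wL wR vplus : ℝ) (hv : 0 < vplus)
    (V Q : ℝ → ℝ → ℝ) (σ Qmax : ℝ → ℝ) (s : ℝ → ℝ → ℝ) (ρd : ℝ → ℝ)
    (hQ : ∀ ρ w, Q ρ w = ρ * V ρ w)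
    (hanti : ∀ w ∈ Set.Icc wL wR, StrictAntiOn (fun ρ => V ρ w) (Set.Icc 0 ρmax))
    (hVmono : ∀ ρ ∈ Set.Icc (0:ℝ) ρmax, ∀ w ∈ Set.Icc wL wR, ∀ w' ∈ Set.Icc wL wR,
      w ≤ w' → V ρ w ≤ V ρ w')
    (hconc : ∀ w ∈ Set.Icc wL wR, StrictConcaveOn ℝ (Set.Icc 0 ρmax) (fun ρ => Q ρ w))
    (hσmem : ∀ w ∈ Set.Icc wL wR, σ w ∈ Set.Ioo 0 ρmax)
    (hσmax : ∀ w ∈ Set.Icc wL wR, ∀ ρ ∈ Set.Icc (0:ℝ) ρmax, Q ρ w ≤ Q (σ w) w)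
    (hQmax : ∀ w ∈ Set.Icc wL wR, Qmax w = Q (σ w) w)
    (hs : ∀ w ∈ Set.Icc wL wR, ∀ ρ,
      (ρ ≤ σ w → s ρ w = Qmax w) ∧ (σ w < ρ → s ρ w = Q ρ w))
    (hρd : ∀ w ∈ Set.Icc wL wR,
      ρd w ∈ Set.Icc (0:ℝ) ρmax ∧ V (ρd w) w = vplus)
    (hQmaxmono : ∀ w ∈ Set.Icc wL wR, ∀ w' ∈ Set.Icc wL wR, w ≤ w' → Qmax w ≤ Qmax w')
    (hρdmono : MonotoneOn ρd (Set.Icc wL wR)) :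
    MonotoneOn (fun w => s (ρd w) w) (Set.Icc wL wR) := by
  intro w hw w' hw' hle
  show s (ρd w) w ≤ s (ρd w') w'
  obtain ⟨hρ, hVρ⟩ := hρd w hw
  obtain ⟨-, hVρ'⟩ := hρd w' hw'
  have hσ := Ioo_subset_Icc_self (hσmem w hw)
  have supply_le_Qmax : s (ρd w) w ≤ Qmax w := by
    rcases le_or_gt (ρd w) (σ w) with h | h
    · exact ((hs w hw _).1 h).le
    · rw [(hs w hw _).2 h, hQmax w hw]
      exact hσmax w hw _ hρ
  rcases le_or_gt (ρd w') (σ w') with hsub' | hsup'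
  · rw [(hs w' hw' _).1 hsub']
    exact supply_le_Qmax.trans (hQmaxmono w hw w' hw' hle)
  rw [(hs w' hw' _).2 hsup', hQ, hVρ']
  rcases le_or_gt (ρd w) (σ w) with hsub | hsup
  · rw [(hs w hw _).1 hsub, hQmax w hw]
    exact maxFlux_le_of_le_argmax_of_argmax_lt hQ hv.le (hanti w hw).antitoneOn
      (hVmono _ hσ w hw w' hw' hle) (hconc w' hw').concaveOn hσ
      (Ioo_subset_Icc_self (hσmem w' hw')) (hσmax w' hw' _ hσ) hρ hVρ hVρ' hsub hsup'
  · rw [(hs w hw _).2 hsup, hQ, hVρ]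
    exact mul_le_mul_of_nonneg_right (hρdmono hw hw' hle) hv.le

/-- The composed supply function w ↦ s(ρ†(v⁺,w), w) is
non-decreasing in w, where ρ†(v⁺,w) is the density with V(ρ†,w) = v⁺,
s(ρ,w) = Qmax(w) for ρ ≤ σ(w) and s(ρ,w) = Q(ρ,w) for ρ > σ(w). -/
theorem gsom_supply_of_rho_dagger_monotone
    (ρmax wL wR vplus : ℝ) (hρmax : 0 < ρmax) (hw : wL ≤ wR) (hv : 0 < vplus)
    (V Q : ℝ → ℝ → ℝ) (σ Qmax : ℝ → ℝ) (s : ℝ → ℝ → ℝ) (ρd : ℝ → ℝ)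
    (hQ : ∀ ρ w, Q ρ w = ρ * V ρ w)
    (hcont : ∀ w ∈ Set.Icc wL wR, ContinuousOn (fun ρ => V ρ w) (Set.Icc 0 ρmax))
    (hanti : ∀ w ∈ Set.Icc wL wR, StrictAntiOn (fun ρ => V ρ w) (Set.Icc 0 ρmax))
    (hzero : ∀ w ∈ Set.Icc wL wR, V ρmax w = 0)
    (hVmono : ∀ ρ ∈ Set.Icc (0:ℝ) ρmax, ∀ w ∈ Set.Icc wL wR, ∀ w' ∈ Set.Icc wL wR,
      w ≤ w' → V ρ w ≤ V ρ w')
    (hconc : ∀ w ∈ Set.Icc wL wR, StrictConcaveOn ℝ (Set.Icc 0 ρmax) (fun ρ => Q ρ w))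
    (hσmem : ∀ w ∈ Set.Icc wL wR, σ w ∈ Set.Ioo 0 ρmax)
    (hσmax : ∀ w ∈ Set.Icc wL wR, ∀ ρ ∈ Set.Icc (0:ℝ) ρmax, Q ρ w ≤ Q (σ w) w)
    (hQmax : ∀ w ∈ Set.Icc wL wR, Qmax w = Q (σ w) w)
    (hs : ∀ w ∈ Set.Icc wL wR, ∀ ρ,
      (ρ ≤ σ w → s ρ w = Qmax w) ∧ (σ w < ρ → s ρ w = Q ρ w))
    (hρd : ∀ w ∈ Set.Icc wL wR,
      ρd w ∈ Set.Icc (0:ℝ) ρmax ∧ V (ρd w) w = vplus)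
    (hQmaxmono : ∀ w ∈ Set.Icc wL wR, ∀ w' ∈ Set.Icc wL wR, w ≤ w' → Qmax w ≤ Qmax w')
    (hρdmono : MonotoneOn ρd (Set.Icc wL wR)) :
    MonotoneOn (fun w => s (ρd w) w) (Set.Icc wL wR) :=
  gsom_supply_of_rho_dagger_monotone_general ρmax wL wR vplus hv V Q σ Qmax s ρd hQ hanti hVmono
    hconc hσmem hσmax hQmax hs hρd hQmaxmono hρdmono
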